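/- arXiv:2211.05108 — 4 statements merged into one kernel-verified Lean document; each statement's English description precedes it below -/
import Mathlib

section
/- Let r and s be nonnegative integers with r ≡ s (mod 8). Then there exists a nondegenerate quadratic space V over ℚ of dimension r + s such that V ⊗ ℝ has signature (r, s) — i.e. V ⊗ ℝ is isometric to the orthogonal direct sum of a positive definite real quadratic space of dimension r and a negative definite one of dimension s — and such that for every prime p, the quadratic space V ⊗ ℚ_p is isometric to the orthogonal direct sum of (r+s)/2 copies of the hyperbolic plane over ℚ_p. -/
/-- A quadratic form is nondegenerate if its associated bilinear (polar) form
`(x, y) ↦ Q(x+y) - Q(x) - Q(y)` has trivial radical. -/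
def QFNondegenerate {R M : Type*} [CommRing R] [AddCommGroup M] [Module R M]
    (Q : QuadraticForm R M) : Prop :=
  ∀ x : M, (∀ y : M, Q (x + y) - Q x - Q y = 0) → x = 0

/-- A real quadratic form has signature `(r, s)` if it is isometric to the orthogonal
direct sum of a positive definite space of dimension `r` and a negative definite one of
dimension `s`. -/
def HasSignature (r s : ℕ) {M : Type*} [AddCommGroup M] [Module ℝ M]
    (Q : QuadraticForm ℝ M) : Prop :=
  ∃ (φ : ((Fin r → ℝ) × (Fin s → ℝ)) ≃ₗ[ℝ] M)
    (Qpos : QuadraticForm ℝ (Fin r → ℝ)) (Qneg : QuadraticForm ℝ (Fin s → ℝ)),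
    (∀ u : Fin r → ℝ, u ≠ 0 → 0 < Qpos u) ∧
    (∀ v : Fin s → ℝ, v ≠ 0 → Qneg v < 0) ∧
    ∀ (u : Fin r → ℝ) (v : Fin s → ℝ), Q (φ (u, v)) = Qpos u + Qneg v


open Finset

/-- `w`-weighted sum of squares on `ι → K` splits as hyperbolic planes indexed by `κ`. -/
def SplitsW (K : Type*) [Field K] (ι κ : Type*) [Fintype ι] [Fintype κ] (w : ι → K) : Prop :=
  ∃ ψ : (κ → K × K) ≃ₗ[K] (ι → K),
    ∀ v : κ → K × K, ∑ j, w j * (ψ v j * ψ v j) = ∑ i, (v i).1 * (v i).2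

variable {K : Type*} [Field K]

theorem SplitsW.transport {ι κ ι' κ' : Type*} [Fintype ι] [Fintype κ] [Fintype ι'] [Fintype κ']
    {w : ι → K} (h : SplitsW K ι κ w) (e : ι' ≃ ι) (eκ : κ' ≃ κ) {w' : ι' → K}
    (hw : ∀ x, w' x = w (e x)) : SplitsW K ι' κ' w' := by
  obtain ⟨ψ, hψ⟩ := h
  refine ⟨(LinearEquiv.funCongrLeft K (K × K) eκ.symm).trans
    (ψ.trans (LinearEquiv.funCongrLeft K K e)), fun v => ?_⟩
  have e1 : ∀ j : ι', ((LinearEquiv.funCongrLeft K (K × K) eκ.symm).trans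
      (ψ.trans (LinearEquiv.funCongrLeft K K e))) v j = ψ (fun t => v (eκ.symm t)) (e j) := by
    intro j; rfl
  simp only [e1]
  calc ∑ j : ι', w' j * (ψ (fun t => v (eκ.symm t)) (e j) * ψ (fun t => v (eκ.symm t)) (e j))
      = ∑ j : ι', w (e j) * (ψ (fun t => v (eκ.symm t)) (e j) * ψ (fun t => v (eκ.symm t)) (e j)) := by
        refine Finset.sum_congr rfl fun j _ => by rw [hw]
    _ = ∑ i : ι, w i * (ψ (fun t => v (eκ.symm t)) i * ψ (fun t => v (eκ.symm t)) i) :=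
        Equiv.sum_comp e (fun i => w i * (ψ (fun t => v (eκ.symm t)) i * ψ (fun t => v (eκ.symm t)) i))
    _ = ∑ t : κ, (v (eκ.symm t)).1 * (v (eκ.symm t)).2 := hψ _
    _ = ∑ i : κ', (v i).1 * (v i).2 := Equiv.sum_comp eκ.symm (fun i => (v i).1 * (v i).2)

theorem SplitsW.negW {ι κ : Type*} [Fintype ι] [Fintype κ] {w : ι → K}
    (h : SplitsW K ι κ w) : SplitsW K ι κ (fun i => - w i) := by
  obtain ⟨ψ, hψ⟩ := h
  refine ⟨(LinearEquiv.piCongrRight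
      (fun _ : κ => (LinearEquiv.refl K K).prodCongr (LinearEquiv.neg K))).trans ψ, fun v => ?_⟩
  have e1 : ∀ j, ((LinearEquiv.piCongrRight
      (fun _ : κ => (LinearEquiv.refl K K).prodCongr (LinearEquiv.neg K))).trans ψ) v j
      = ψ (fun t => ((v t).1, -(v t).2)) j := fun j => rfl
  simp only [e1]
  have := hψ (fun t => ((v t).1, -(v t).2))
  calc ∑ j, -w j * (ψ (fun t => ((v t).1, -(v t).2)) j * ψ (fun t => ((v t).1, -(v t).2)) j)
      = - ∑ j, w j * (ψ (fun t => ((v t).1, -(v t).2)) j * ψ (fun t => ((v t).1, -(v t).2)) j) := by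
        rw [← Finset.sum_neg_distrib]; exact Finset.sum_congr rfl fun j _ => by ring
    _ = - ∑ t : κ, (v t).1 * (-(v t).2) := by rw [this]
    _ = ∑ i, (v i).1 * (v i).2 := by
        rw [← Finset.sum_neg_distrib]; exact Finset.sum_congr rfl fun j _ => by ring

theorem SplitsW.sumW {ι₁ κ₁ ι₂ κ₂ : Type*} [Fintype ι₁] [Fintype κ₁] [Fintype ι₂] [Fintype κ₂]
    {w₁ : ι₁ → K} {w₂ : ι₂ → K} (h₁ : SplitsW K ι₁ κ₁ w₁) (h₂ : SplitsW K ι₂ κ₂ w₂) :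
    SplitsW K (ι₁ ⊕ ι₂) (κ₁ ⊕ κ₂) (Sum.elim w₁ w₂) := by
  obtain ⟨ψ₁, hψ₁⟩ := h₁
  obtain ⟨ψ₂, hψ₂⟩ := h₂
  refine ⟨(LinearEquiv.sumArrowLequivProdArrow κ₁ κ₂ K (K × K)).trans
    ((ψ₁.prodCongr ψ₂).trans (LinearEquiv.sumArrowLequivProdArrow ι₁ ι₂ K K).symm), fun v => ?_⟩
  have e1 : ∀ j, ((LinearEquiv.sumArrowLequivProdArrow κ₁ κ₂ K (K × K)).trans
      ((ψ₁.prodCongr ψ₂).trans (LinearEquiv.sumArrowLequivProdArrow ι₁ ι₂ K K).symm)) v j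
      = Sum.elim (ψ₁ (fun t => v (Sum.inl t))) (ψ₂ (fun t => v (Sum.inr t))) j := by
    intro j; cases j <;> rfl
  simp only [e1]
  rw [Fintype.sum_sum_type, Fintype.sum_sum_type]
  simp only [Sum.elim_inl, Sum.elim_inr]
  rw [hψ₁, hψ₂]

theorem SplitsW.copies {ι κ : Type*} [Fintype ι] [Fintype κ] {w : ι → K}
    (h : SplitsW K ι κ w) (γ : Type*) [Fintype γ] :
    SplitsW K (γ × ι) (γ × κ) (fun x => w x.2) := by
  obtain ⟨ψ, hψ⟩ := h
  refine ⟨(LinearEquiv.curry K (K × K) γ κ).trans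
    ((LinearEquiv.piCongrRight (fun _ : γ => ψ)).trans (LinearEquiv.curry K K γ ι).symm),
    fun v => ?_⟩
  have e1 : ∀ x : γ × ι, ((LinearEquiv.curry K (K × K) γ κ).trans
      ((LinearEquiv.piCongrRight (fun _ : γ => ψ)).trans (LinearEquiv.curry K K γ ι).symm)) v x
      = ψ (fun t => v (x.1, t)) x.2 := fun x => rfl
  simp only [e1]
  rw [Fintype.sum_prod_type, Fintype.sum_prod_type]
  exact Finset.sum_congr rfl fun g _ => by simpa using hψ (fun t => v (g, t))
open Finset
variable {K : Type*} [Field K]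

/-- `(x,y) ↦ ((x+y)/2, (x-y)/2)`, an isometry carrying `u*v` to `x²-y²`. -/
def pairCore (K : Type*) [Field K] [CharZero K] : (K × K) ≃ₗ[K] K × K where
  toFun x := ((x.1 + x.2)/2, (x.1 - x.2)/2)
  invFun y := (y.1 + y.2, y.1 - y.2)
  map_add' x y := by ext <;> simp <;> ring
  map_smul' c x := by ext <;> simp [smul_eq_mul] <;> ring
  left_inv x := by ext <;> field_simp <;> ring
  right_inv y := by ext <;> field_simp <;> ring

theorem splits_pair (K : Type*) [Field K] [CharZero K] :
    SplitsW K (Unit ⊕ Unit) Unit (Sum.elim (fun _ => (1 : K)) (fun _ => -1)) := by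
  refine ⟨(LinearEquiv.funUnique Unit K (K × K)).trans ((pairCore K).trans
    (((LinearEquiv.funUnique Unit K K).symm.prodCongr (LinearEquiv.funUnique Unit K K).symm).trans
      (LinearEquiv.sumArrowLequivProdArrow Unit Unit K K).symm)), fun v => ?_⟩
  have e1 : ∀ j, ((LinearEquiv.funUnique Unit K (K × K)).trans ((pairCore K).trans
      (((LinearEquiv.funUnique Unit K K).symm.prodCongr (LinearEquiv.funUnique Unit K K).symm).trans
      (LinearEquiv.sumArrowLequivProdArrow Unit Unit K K).symm))) v j
      = Sum.elim (fun _ : Unit => ((v ()).1 + (v ()).2)/2)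
          (fun _ : Unit => ((v ()).1 - (v ()).2)/2) j := by
    intro j; cases j <;> rfl
  simp only [e1]
  rw [Fintype.sum_sum_type]
  simp only [Sum.elim_inl, Sum.elim_inr, Sum.elim_lam_const_lam_const, Finset.univ_unique,
    Finset.sum_singleton]
  field_simp
  ring
variable {K : Type*} [Field K]

/-- Left multiplication by the quaternion `a + bi + cj + dk` on coordinates. -/
def eulerMap (a b c d : K) (Y : Fin 4 → K) : Fin 4 → K :=
  ![a*Y 0 - b*Y 1 - c*Y 2 - d*Y 3,
    b*Y 0 + a*Y 1 - d*Y 2 + c*Y 3,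
    c*Y 0 + d*Y 1 + a*Y 2 - b*Y 3,
    d*Y 0 - c*Y 1 + b*Y 2 + a*Y 3]

theorem vec_eta4 {α : Type*} (z : Fin 4 → α) : ![z 0, z 1, z 2, z 3] = z := by
  funext j; fin_cases j <;> rfl

theorem euler_conj_eq {a b c d : K} (h : a^2 + b^2 + c^2 + d^2 = -1) (z0 z1 z2 z3 : K) :
    eulerMap a b c d (fun j => -(eulerMap a (-b) (-c) (-d) ![z0, z1, z2, z3] j))
      = ![z0, z1, z2, z3] := by
  funext i
  fin_cases i <;> simp [eulerMap]
  · linear_combination (-z0) * h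
  · linear_combination (-z1) * h
  · linear_combination (-z2) * h
  · linear_combination (-z3) * h

set_option maxHeartbeats 1000000 in
def eightEquiv [CharZero K] (a b c d : K) (h : a^2 + b^2 + c^2 + d^2 = -1) :
    (Fin 4 → K × K) ≃ₗ[K] (Fin 4 ⊕ Fin 4 → K) where
  toFun v := Sum.elim (fun i => ((v i).1 + (v i).2)/2)
    (eulerMap a b c d (fun i => ((v i).1 - (v i).2)/2))
  invFun x := fun i => (x (Sum.inl i) + (-(eulerMap a (-b) (-c) (-d) (fun j => x (Sum.inr j)) i)),
    x (Sum.inl i) - (-(eulerMap a (-b) (-c) (-d) (fun j => x (Sum.inr j)) i)))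
  map_add' x y := by
    funext j
    rcases j with i | i <;> [skip; fin_cases i] <;> simp [eulerMap] <;> ring
  map_smul' c' x := by
    funext j
    rcases j with i | i <;> [skip; fin_cases i] <;> simp [eulerMap, smul_eq_mul] <;> ring
  left_inv v := by
    funext i
    rw [Prod.ext_iff]
    fin_cases i <;> constructor <;> simp [eulerMap]
    · linear_combination (((v 0).2 - (v 0).1)/2) * h
    · linear_combination (((v 0).1 - (v 0).2)/2) * h
    · linear_combination (((v 1).2 - (v 1).1)/2) * h
    · linear_combination (((v 1).1 - (v 1).2)/2) * h
    · linear_combination (((v 2).2 - (v 2).1)/2) * h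
    · linear_combination (((v 2).1 - (v 2).2)/2) * h
    · linear_combination (((v 3).2 - (v 3).1)/2) * h
    · linear_combination (((v 3).1 - (v 3).2)/2) * h
  right_inv x := by
    funext j
    have harg : (fun i0 => ((x (Sum.inl i0) + -(eulerMap a (-b) (-c) (-d)
          (fun j => x (Sum.inr j)) i0)) - (x (Sum.inl i0) - -(eulerMap a (-b) (-c) (-d)
          (fun j => x (Sum.inr j)) i0)))/2)
        = fun i0 => -(eulerMap a (-b) (-c) (-d) (fun j => x (Sum.inr j)) i0) := by
      funext i0; ring
    have hx : (fun j => x (Sum.inr j))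
        = ![x (Sum.inr 0), x (Sum.inr 1), x (Sum.inr 2), x (Sum.inr 3)] := (vec_eta4 _).symm
    rcases j with i | i
    · simp only [Sum.elim_inl]; ring
    · simp only [Sum.elim_inr]
      rw [harg, hx, euler_conj_eq h, ← hx]

theorem splits_eight {K : Type*} [Field K] [CharZero K] {a b c d : K}
    (h : a^2 + b^2 + c^2 + d^2 = -1) :
    SplitsW K (Fin 4 ⊕ Fin 4) (Fin 4) (fun _ => (1 : K)) := by
  refine ⟨eightEquiv a b c d h, fun v => ?_⟩
  have e1 : ∀ j, eightEquiv a b c d h v j = Sum.elim (fun i => ((v i).1 + (v i).2)/2)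
      (eulerMap a b c d (fun i => ((v i).1 - (v i).2)/2)) j := fun j => rfl
  simp only [e1]
  rw [Fintype.sum_sum_type]
  simp only [Sum.elim_inl, Sum.elim_inr, one_mul]
  rw [Fin.sum_univ_four, Fin.sum_univ_four, Fin.sum_univ_four]
  simp only [eulerMap, Matrix.cons_val_zero, Matrix.cons_val_one, Matrix.head_cons,
    Matrix.cons_val_two, Matrix.tail_cons, Matrix.cons_val_three]
  linear_combination ((((v 0).1 - (v 0).2)/2)^2 + (((v 1).1 - (v 1).2)/2)^2
    + (((v 2).1 - (v 2).2)/2)^2 + (((v 3).1 - (v 3).2)/2)^2) * h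

open scoped Classical in
theorem exists_weight_perm {K : Type*} [Field K] {ι : Type*} [Fintype ι] (w w' : ι → K)

    (hw : ∀ x, w x = 1 ∨ w x = -1) (hw' : ∀ x, w' x = 1 ∨ w' x = -1)
    (hcard : Fintype.card {x // w x = 1} = Fintype.card {x // w' x = 1}) :
    ∃ e : ι ≃ ι, ∀ x, w' x = w (e x) := by
  classical
  let e₁ : {x // w' x = 1} ≃ {x // w x = 1} := Fintype.equivOfCardEq hcard.symm
  let e₂ : {x // ¬ w' x = 1} ≃ {x // ¬ w x = 1} := Fintype.equivOfCardEq (by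
    rw [Fintype.card_subtype_compl, Fintype.card_subtype_compl, hcard])
  refine ⟨(Equiv.sumCompl (fun x => w' x = 1)).symm.trans
    ((Equiv.sumCongr e₁ e₂).trans (Equiv.sumCompl (fun x => w x = 1))), fun x => ?_⟩
  by_cases hx : w' x = 1
  · rw [hx]
    rw [Equiv.trans_apply, Equiv.trans_apply,
      Equiv.sumCompl_symm_apply_of_pos (p := fun x => w' x = 1) hx]
    simp only [Equiv.sumCongr_apply, Sum.map_inl, Equiv.sumCompl_apply_inl]
    exact ((e₁ ⟨x, hx⟩).2).symm
  · have hx' : w' x = -1 := (hw' x).resolve_left hx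
    rw [hx']
    rw [Equiv.trans_apply, Equiv.trans_apply,
      Equiv.sumCompl_symm_apply_of_neg (p := fun x => w' x = 1) hx]
    simp only [Equiv.sumCongr_apply, Sum.map_inr, Equiv.sumCompl_apply_inr]
    exact ((hw _).resolve_left (e₂ ⟨x, hx⟩).2).symm

open scoped Classical in
theorem card_std {K : Type*} [Field K] (hK : (1 : K) ≠ -1) (r n : ℕ) (hr : r ≤ n) :
    Fintype.card {x : Fin n // (if (x : ℕ) < r then (1 : K) else -1) = 1} = r := by
  classical
  have hiff : ∀ x : Fin n, ((if (x : ℕ) < r then (1 : K) else -1) = 1) ↔ (x : ℕ) < r := by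
    intro x
    by_cases h : (x : ℕ) < r
    · simp [h]
    · rw [if_neg h]; exact iff_of_false (fun hh => hK hh.symm) h
  rw [Fintype.card_congr (Equiv.subtypeEquivRight hiff)]
  rw [Fintype.card_congr (⟨fun x => (⟨x.1, x.2⟩ : Fin r),
    fun j => ⟨⟨j.1, lt_of_lt_of_le j.2 hr⟩, j.2⟩,
    fun x => by ext; rfl, fun j => by ext; rfl⟩ :
      {x : Fin n // (x : ℕ) < r} ≃ Fin r)]
  exact Fintype.card_fin r

open scoped Classical in
theorem card_struct {K : Type*} [Field K] (hK : (1 : K) ≠ -1) (t k : ℕ) (c : K) :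
    Fintype.card {y : (Fin t × (Unit ⊕ Unit)) ⊕ (Fin k × (Fin 4 ⊕ Fin 4)) //
        Sum.elim (fun x : Fin t × (Unit ⊕ Unit) => Sum.elim (fun _ => (1 : K)) (fun _ => -1) x.2)
          (fun _ : Fin k × (Fin 4 ⊕ Fin 4) => c) y = 1}
      = t + (if c = 1 then 8 * k else 0) := by
  classical
  have hm1 : ((-1 : K) = 1) = False := by
    simp only [eq_iff_iff, iff_false]; exact fun hh => hK hh.symm
  rw [Fintype.card_subtype, Finset.card_filter, Fintype.sum_sum_type,
    Fintype.sum_prod_type, Fintype.sum_prod_type]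
  simp only [Sum.elim_inl, Sum.elim_inr, Fintype.sum_sum_type, hm1]
  simp [Finset.sum_const]
  by_cases hc : c = 1 <;> simp [hc] <;> ring

theorem one_ne_neg_one {K : Type*} [Field K] [CharZero K] : (1 : K) ≠ -1 := by
  intro hh
  exact two_ne_zero (α := K) (by linear_combination hh)

open scoped Classical in
theorem assemble {K : Type*} [Field K] [CharZero K] (t k : ℕ) (c : K)
    (hblock : SplitsW K (Fin 4 ⊕ Fin 4) (Fin 4) (fun _ => c)) (r : ℕ)
    (hcr : (c = 1 ∧ r = t + 8 * k) ∨ (c = -1 ∧ r = t)) :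
    SplitsW K (Fin (2*t + 8*k)) (Fin (t + 4*k))
      (fun i => if (i : ℕ) < r then (1 : K) else -1) := by
  classical
  have hK : (1 : K) ≠ -1 := one_ne_neg_one
  have ST := ((splits_pair K).copies (Fin t)).sumW (hblock.copies (Fin k))
  have e0 : Fin (2*t + 8*k) ≃ ((Fin t × (Unit ⊕ Unit)) ⊕ (Fin k × (Fin 4 ⊕ Fin 4))) :=
    Fintype.equivOfCardEq (by simp; ring)
  have eκ : Fin (t + 4*k) ≃ ((Fin t × Unit) ⊕ (Fin k × Fin 4)) :=
    Fintype.equivOfCardEq (by simp; ring)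
  set W : (Fin t × (Unit ⊕ Unit)) ⊕ (Fin k × (Fin 4 ⊕ Fin 4)) → K :=
    Sum.elim (fun x : Fin t × (Unit ⊕ Unit) => Sum.elim (fun _ => (1 : K)) (fun _ => -1) x.2)
      (fun _ : Fin k × (Fin 4 ⊕ Fin 4) => c) with hW
  have h0 : SplitsW K (Fin (2*t + 8*k)) (Fin (t + 4*k)) (fun x => W (e0 x)) :=
    ST.transport e0 eκ (fun x => rfl)
  have hc : c = 1 ∨ c = -1 := by rcases hcr with ⟨h1, _⟩ | ⟨h1, _⟩ <;> [left; right] <;> exact h1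
  have hcvals : ∀ x, W (e0 x) = 1 ∨ W (e0 x) = -1 := by
    intro x
    rcases e0 x with y | y
    · rcases y with ⟨g, u | u⟩ <;> simp [hW]
    · simpa [hW] using hc
  have hrn : r ≤ 2*t + 8*k := by rcases hcr with ⟨_, h1⟩ | ⟨_, h1⟩ <;> omega
  have hcW : Fintype.card {y // W y = 1} = r := by
    rw [hW, card_struct hK t k c]
    rcases hcr with ⟨h1, h2⟩ | ⟨h1, h2⟩
    · rw [if_pos h1]; omega
    · rw [if_neg (by rw [h1]; exact fun hh => hK hh.symm)]; omega
  have hc0 : Fintype.card {x : Fin (2*t + 8*k) // W (e0 x) = 1} = r := by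
    rw [← hcW]; exact Fintype.card_congr (e0.subtypeEquiv (fun x => Iff.rfl))
  obtain ⟨e, he⟩ := exists_weight_perm (fun x => W (e0 x))
    (fun i => if (i : ℕ) < r then (1 : K) else -1) hcvals
    (fun x => by by_cases h : (x : ℕ) < r <;> simp [h])
    (hc0.trans (card_std hK r (2*t + 8*k) hrn).symm)
  exact h0.transport e (Equiv.refl _) he

theorem master_splits (K : Type*) [Field K] [CharZero K]
    (hq : ∃ a b c d : K, a^2 + b^2 + c^2 + d^2 = -1) (r s : ℕ) (h8 : r ≡ s [MOD 8]) :
    SplitsW K (Fin (r + s)) (Fin ((r + s)/2))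
      (fun i => if (i : ℕ) < r then (1 : K) else -1) := by
  obtain ⟨a, b, c, d, h⟩ := hq
  have h8' : r % 8 = s % 8 := h8
  rcases le_total s r with hle | hle
  · have := assemble (K := K) s ((r - s)/8) 1 (splits_eight h) r (Or.inl ⟨rfl, by omega⟩)
    exact this.transport (finCongr (by omega)) (finCongr (by omega))
      (fun x => by rw [finCongr_apply, Fin.coe_cast])
  · have S8' : SplitsW K (Fin 4 ⊕ Fin 4) (Fin 4) (fun _ => (-1 : K)) := (splits_eight h).negW
    have := assemble (K := K) r ((s - r)/8) (-1) S8' r (Or.inr ⟨rfl, rfl⟩)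
    exact this.transport (finCongr (by omega)) (finCongr (by omega))
      (fun x => by rw [finCongr_apply, Fin.coe_cast])

open Polynomial in
theorem exists_sum4_padic (p : ℕ) [Fact p.Prime] :
    ∃ a b c d : ℚ_[p], a^2 + b^2 + c^2 + d^2 = -1 := by
  by_cases hp2 : p = 2
  · subst hp2
    have hnorm : ‖(X^2 + C 7 : Polynomial ℤ_[2]).eval 1‖ <
        ‖(Polynomial.derivative (X^2 + C 7 : Polynomial ℤ_[2])).eval 1‖^2 := by
      have h1 : (X^2 + C 7 : Polynomial ℤ_[2]).eval 1 = 8 := by simp; norm_num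
      have h2 : (Polynomial.derivative (X^2 + C 7 : Polynomial ℤ_[2])).eval 1 = 2 := by
        simp; norm_num
      rw [h1, h2]
      have h8 : (8 : ℤ_[2]) = (2 : ℤ_[2])^3 := by norm_num
      have hp : ‖(2 : ℤ_[2])‖ = (2 : ℝ)⁻¹ := by
        simpa using PadicInt.norm_p (p := 2)
      rw [h8, norm_pow, hp]
      norm_num
    obtain ⟨z, hz, -⟩ := hensels_lemma hnorm
    have hz' : z^2 + 7 = 0 := by simpa using hz
    refine ⟨2, 1, 1, (z : ℚ_[2]), ?_⟩
    have : ((z : ℚ_[2]))^2 + 7 = 0 := by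
      have := congrArg (fun w : ℤ_[2] => (w : ℚ_[2])) hz'
      push_cast at this
      have h7 : ((7 : ℤ_[2]) : ℚ_[2]) = 7 := PadicInt.coe_natCast 7
      simpa [h7] using this
    linear_combination this
  · obtain ⟨a₀, b₀, hab⟩ := ZMod.sq_add_sq p (-1)
    have hpair : ∃ A B : ZMod p, A^2 + B^2 = -1 ∧ A ≠ 0 := by
      rcases eq_or_ne a₀ 0 with h0 | h0
      · refine ⟨b₀, a₀, by linear_combination hab, fun hb0 => ?_⟩
        rw [h0, hb0] at hab
        have : (1 : ZMod p) = 0 := by linear_combination hab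
        exact one_ne_zero this
      · exact ⟨a₀, b₀, hab, h0⟩
    obtain ⟨A, B, hAB, hA0⟩ := hpair
    have hplt : 1 < p := (Fact.out (p := p.Prime)).one_lt
    haveI : NeZero p := ⟨by omega⟩
    set n : ℕ := A.val^2 + B.val^2 + 1 with hn
    have hpn : p ∣ n := by
      rw [← ZMod.natCast_eq_zero_iff, hn]
      push_cast [ZMod.natCast_zmod_val]
      linear_combination hAB
    have hpA : ¬ (p:ℤ) ∣ (2 * A.val : ℤ) := by
      have hA : ¬ p ∣ A.val := by
        intro hdvd
        have hlt : A.val < p := ZMod.val_lt A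
        have hv0 : A.val = 0 := by
          rcases Nat.eq_zero_of_dvd_of_lt hdvd hlt with h
          exact h
        exact hA0 ((ZMod.val_eq_zero A).mp hv0)
      intro hdvd
      rcases (Int.Prime.dvd_mul' (Fact.out) hdvd) with h2 | hA'
      · have h2' : p ∣ 2 := by exact_mod_cast h2
        have := Nat.le_of_dvd (by norm_num) h2'
        have h2le := (Fact.out (p := p.Prime)).two_le
        omega
      · exact hA (Int.ofNat_dvd.mp (by exact_mod_cast hA'))
    have hnorm : ‖(X^2 + C ((B.val : ℤ_[p])^2 + 1) : Polynomial ℤ_[p]).eval (A.val : ℤ_[p])‖ <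
        ‖(Polynomial.derivative (X^2 + C ((B.val : ℤ_[p])^2 + 1) : Polynomial ℤ_[p])).eval
          (A.val : ℤ_[p])‖^2 := by
      have h1 : (X^2 + C ((B.val : ℤ_[p])^2 + 1) : Polynomial ℤ_[p]).eval (A.val : ℤ_[p])
          = ((n : ℤ) : ℤ_[p]) := by simp [hn]; push_cast; ring
      have hder : Polynomial.derivative (X^2 + C ((B.val : ℤ_[p])^2 + 1) : Polynomial ℤ_[p])
          = C 2 * X := by
        rw [Polynomial.derivative_add, Polynomial.derivative_C, Polynomial.derivative_X_pow]
        norm_num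
      have h2 : (Polynomial.derivative (X^2 + C ((B.val : ℤ_[p])^2 + 1) :
          Polynomial ℤ_[p])).eval (A.val : ℤ_[p]) = (((2 * A.val : ℕ) : ℤ) : ℤ_[p]) := by
        rw [hder]
        simp only [Polynomial.eval_mul, Polynomial.eval_C, Polynomial.eval_X]
        push_cast
        ring
      rw [h1, h2]
      have hlt1 : ‖(((n : ℤ)) : ℤ_[p])‖ < 1 :=
        (PadicInt.norm_int_lt_one_iff_dvd _).mpr (Int.natCast_dvd_natCast.mpr hpn)
      have heq1 : ‖((((2 * A.val : ℕ) : ℤ)) : ℤ_[p])‖ = 1 := by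
        refine le_antisymm (PadicInt.norm_le_one _) ?_
        by_contra hlt
        push_neg at hlt
        exact hpA (by exact_mod_cast (PadicInt.norm_int_lt_one_iff_dvd _).mp hlt)
      rw [heq1]
      simpa using hlt1
    obtain ⟨z, hz, -⟩ := hensels_lemma hnorm
    have hz' : z^2 + ((B.val : ℤ_[p])^2 + 1) = 0 := by simpa using hz
    refine ⟨(z : ℚ_[p]), ((B.val : ℕ) : ℚ_[p]), 0, 0, ?_⟩
    have : ((z : ℚ_[p]))^2 + (((B.val : ℕ) : ℚ_[p])^2 + 1) = 0 := by
      have := congrArg (fun w : ℤ_[p] => (w : ℚ_[p])) hz'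
      push_cast at this
      simpa using this
    linear_combination this

/-- Let `r ≡ s (mod 8)` be nonnegative integers.  There exists a nondegenerate quadratic
space `V` over `ℚ` of dimension `r + s` whose real completion has signature `(r, s)` and
whose completion at every prime `p` is isometric to the orthogonal direct sum of
`(r+s)/2` copies of the hyperbolic plane over `ℚ_p`. -/
theorem exists_global_quadratic_space_split_everywhere
    (r s : ℕ) (h8 : r ≡ s [MOD 8]) :
    ∃ Q : QuadraticForm ℚ (Fin (r + s) → ℚ),
      QFNondegenerate Q ∧
      (∃ Qr : QuadraticForm ℝ (Fin (r + s) → ℝ),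
        (∀ x : Fin (r + s) → ℚ, Qr (fun i => (x i : ℝ)) = (Q x : ℝ)) ∧
        HasSignature r s Qr) ∧
      ∀ (p : ℕ) [Fact p.Prime],
        ∃ Qp : QuadraticForm ℚ_[p] (Fin (r + s) → ℚ_[p]),
          (∀ x : Fin (r + s) → ℚ, Qp (fun i => (x i : ℚ_[p])) = (Q x : ℚ_[p])) ∧
          ∃ ψ : (Fin ((r + s) / 2) → ℚ_[p] × ℚ_[p]) ≃ₗ[ℚ_[p]] (Fin (r + s) → ℚ_[p]),
            ∀ v : Fin ((r + s) / 2) → ℚ_[p] × ℚ_[p],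
              Qp (ψ v) = ∑ i, (v i).1 * (v i).2 := by
  classical
  refine ⟨QuadraticMap.weightedSumSquares ℚ
    (fun i : Fin (r + s) => if (i : ℕ) < r then (1 : ℚ) else -1), ?_, ?_, ?_⟩
  · -- nondegeneracy
    intro x hx
    funext j
    have hj := hx (Pi.single j 1)
    rw [QuadraticMap.weightedSumSquares_apply, QuadraticMap.weightedSumSquares_apply,
      QuadraticMap.weightedSumSquares_apply, ← Finset.sum_sub_distrib,
      ← Finset.sum_sub_distrib] at hj
    rw [Finset.sum_eq_single j (fun i _ hij => by
        simp [Pi.single_eq_of_ne hij]) (fun hj' => absurd (Finset.mem_univ j) hj')] at hj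
    simp only [Pi.add_apply, Pi.single_eq_same, smul_eq_mul] at hj
    have h2 : (if (j : ℕ) < r then (1 : ℚ) else -1) * (2 * x j) = 0 := by linear_combination hj
    have hw : (if (j : ℕ) < r then (1 : ℚ) else -1) ≠ 0 := by
      by_cases h : (j : ℕ) < r <;> simp [h]
    have := mul_eq_zero.mp h2
    rcases this with h | h
    · exact absurd h hw
    · have : x j = 0 := by linarith
      simpa using this
  · -- real completion
    refine ⟨QuadraticMap.weightedSumSquares ℝ
      (fun i : Fin (r + s) => if (i : ℕ) < r then (1 : ℝ) else -1), fun x => ?_, ?_⟩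
    · rw [QuadraticMap.weightedSumSquares_apply, QuadraticMap.weightedSumSquares_apply]
      push_cast
      refine Finset.sum_congr rfl fun i _ => ?_
      by_cases h : (i : ℕ) < r <;> simp [h]
    · refine ⟨(LinearEquiv.sumArrowLequivProdArrow (Fin r) (Fin s) ℝ ℝ).symm.trans
        (LinearEquiv.funCongrLeft ℝ ℝ finSumFinEquiv.symm),
        QuadraticMap.weightedSumSquares ℝ (fun _ : Fin r => (1 : ℝ)),
        QuadraticMap.weightedSumSquares ℝ (fun _ : Fin s => (-1 : ℝ)), ?_, ?_, ?_⟩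
      · intro u hu
        obtain ⟨i, hi⟩ := Function.ne_iff.mp hu
        rw [QuadraticMap.weightedSumSquares_apply]
        simp only [one_smul]
        exact Finset.sum_pos' (fun i _ => mul_self_nonneg _)
          ⟨i, Finset.mem_univ i, mul_self_pos.mpr (by simpa using hi)⟩
      · intro v hv
        obtain ⟨i, hi⟩ := Function.ne_iff.mp hv
        rw [QuadraticMap.weightedSumSquares_apply]
        simp only [neg_smul, one_smul, Finset.sum_neg_distrib, neg_lt, neg_zero]
        exact Finset.sum_pos' (fun i _ => mul_self_nonneg _)
          ⟨i, Finset.mem_univ i, mul_self_pos.mpr (by simpa using hi)⟩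
      · intro u v
        have hφ : ∀ j : Fin (r + s),
            ((LinearEquiv.sumArrowLequivProdArrow (Fin r) (Fin s) ℝ ℝ).symm.trans
              (LinearEquiv.funCongrLeft ℝ ℝ finSumFinEquiv.symm)) (u, v) j
              = Sum.elim u v (finSumFinEquiv.symm j) := fun j => rfl
        rw [QuadraticMap.weightedSumSquares_apply]
        simp only [hφ]
        rw [← Equiv.sum_comp finSumFinEquiv
          (fun j : Fin (r + s) => (if ((j : Fin (r + s)) : ℕ) < r then (1 : ℝ) else -1)
            • (Sum.elim u v (finSumFinEquiv.symm j) * Sum.elim u v (finSumFinEquiv.symm j)))]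
        rw [Fintype.sum_sum_type]
        rw [QuadraticMap.weightedSumSquares_apply, QuadraticMap.weightedSumSquares_apply]
        congr 1
        · refine Finset.sum_congr rfl fun i _ => ?_
          rw [Equiv.symm_apply_apply]
          have : ((finSumFinEquiv (Sum.inl i) : Fin (r + s)) : ℕ) < r := by
            simp [finSumFinEquiv_apply_left]
          rw [if_pos this]
          simp
        · refine Finset.sum_congr rfl fun i _ => ?_
          rw [Equiv.symm_apply_apply]
          have : ¬ ((finSumFinEquiv (Sum.inr i) : Fin (r + s)) : ℕ) < r := by
            simp [finSumFinEquiv_apply_right]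
          rw [if_neg this]
          simp
  · -- p-adic completions
    intro p hp
    obtain ⟨ψ, hψ⟩ := master_splits ℚ_[p] (exists_sum4_padic p) r s h8
    refine ⟨QuadraticMap.weightedSumSquares ℚ_[p]
      (fun i : Fin (r + s) => if (i : ℕ) < r then (1 : ℚ_[p]) else -1), fun x => ?_, ψ, fun v => ?_⟩
    · rw [QuadraticMap.weightedSumSquares_apply, QuadraticMap.weightedSumSquares_apply]
      push_cast
      refine Finset.sum_congr rfl fun i _ => ?_
      by_cases h : (i : ℕ) < r <;> simp [h]
    · rw [QuadraticMap.weightedSumSquares_apply]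
      simp only [smul_eq_mul]
      exact hψ v
end

section
/- Let p be a prime and let J be a quadratic lattice over ℤ_p of rank n, i.e. a free ℤ_p-module of rank n with a ℤ_p-valued quadratic form whose extension to J ⊗ ℚ_p is nondegenerate. Then there exists an isometric embedding J → (H ⊗ ℤ_p)^n, the orthogonal direct sum of n hyperbolic planes over ℤ_p, whose image is a ℤ_p-module direct summand of (H ⊗ ℤ_p)^n. -/
open scoped TensorProduct

/-- Let `p` be a prime and `J` a quadratic lattice over `ℤ_p` of rank `n` (a free rank-`n`
`ℤ_p`-module with a `ℤ_p`-valued quadratic form whose extension to `J ⊗ ℚ_p` is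
nondegenerate).  Then there is an isometric embedding `J → (H ⊗ ℤ_p)^n` into the
orthogonal direct sum of `n` hyperbolic planes over `ℤ_p`, whose image is a
`ℤ_p`-module direct summand. -/
theorem exists_isometric_embedding_into_hyperbolics
    (p : ℕ) [Fact p.Prime] (n : ℕ)
    (J : Type*) [AddCommGroup J] [Module ℤ_[p] J]
    [Module.Free ℤ_[p] J] [Module.Finite ℤ_[p] J]
    (hrank : Module.finrank ℤ_[p] J = n)
    (Q : QuadraticForm ℤ_[p] J)
    (Qq : QuadraticForm ℚ_[p] (ℚ_[p] ⊗[ℤ_[p]] J))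
    (hQq : ∀ x : J, Qq ((1 : ℚ_[p]) ⊗ₜ[ℤ_[p]] x) = ((Q x : ℤ_[p]) : ℚ_[p]))
    (hnd : QFNondegenerate Qq) :
    ∃ f : J →ₗ[ℤ_[p]] (Fin n → ℤ_[p] × ℤ_[p]),
      Function.Injective f ∧
      (∀ x : J, ∑ i, (f x i).1 * (f x i).2 = Q x) ∧
      ∃ C : Submodule ℤ_[p] (Fin n → ℤ_[p] × ℤ_[p]), IsCompl (LinearMap.range f) C := by
  classical
  -- basis of J indexed by Fin n
  let b : Module.Basis (Fin n) ℤ_[p] J :=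
    (Module.finBasis ℤ_[p] J).reindex (finCongr hrank)
  -- a (triangular) bilinear form with B x x = Q x
  obtain ⟨B, hB⟩ := LinearMap.BilinMap.toQuadraticMap_surjective (R := ℤ_[p]) (M := J)
    (N := ℤ_[p]) Q
  have hBQ : ∀ x : J, B x x = Q x := by
    intro x; rw [← hB]; rfl
  -- the embedding
  refine ⟨LinearMap.pi (fun i => (b.coord i).prod ((B (b i)))), ?_, ?_, ?_⟩
  · -- injectivity
    intro x y hxy
    apply b.repr.injective
    ext i
    have := congrArg (fun v => (v i).1) hxy
    simpa [b.coord_apply] using this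
  · -- isometry
    intro x
    have hsum : ∑ i, (b.repr x i) • (B (b i) x) = B x x := by
      have h1 : B x = ∑ i, (b.repr x i) • B (b i) := by
        conv_lhs => rw [← b.sum_repr x]
        simp only [map_sum, map_smul]
      rw [h1, LinearMap.sum_apply]
      simp
    simpa [b.coord_apply, smul_eq_mul] using hsum.trans (hBQ x)
  · -- direct summand
    set f : J →ₗ[ℤ_[p]] (Fin n → ℤ_[p] × ℤ_[p]) :=
      LinearMap.pi (fun i => (b.coord i).prod ((B (b i))))
    -- retraction
    let r : (Fin n → ℤ_[p] × ℤ_[p]) →ₗ[ℤ_[p]] J :=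
      (b.equivFun.symm : (Fin n → ℤ_[p]) →ₗ[ℤ_[p]] J).comp
        (LinearMap.pi (fun i => (LinearMap.fst ℤ_[p] ℤ_[p] ℤ_[p]).comp (LinearMap.proj i)))
    have hrf : ∀ x : J, r (f x) = x := by
      intro x
      show b.equivFun.symm (fun i => (f x i).1) = x
      have : (fun i => (f x i).1) = b.equivFun x := by
        ext i; simp [f, b.coord_apply, Module.Basis.equivFun_apply]
      rw [this, LinearEquiv.symm_apply_apply]
    -- projection onto the range
    let π : (Fin n → ℤ_[p] × ℤ_[p]) →ₗ[ℤ_[p]] LinearMap.range f :=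
      LinearMap.codRestrict _ (f.comp r) (fun x => ⟨r x, rfl⟩)
    have hπ : ∀ x : LinearMap.range f, π x = x := by
      rintro ⟨_, y, rfl⟩
      apply Subtype.ext
      show f (r (f y)) = f y
      rw [hrf y]
    exact ⟨LinearMap.ker π, LinearMap.isCompl_of_proj hπ⟩
end

section
/- Let Σ be a finite set of prime numbers and let A = ℤ[Σ⁻¹] be the localization of ℤ obtained by inverting the primes in Σ. Let R be a Noetherian local A-algebra that is Cohen–Macaulay. Then the following are equivalent: (1) R is flat as an A-module; (2) for every minimal prime ideal P of R, the quotient R/P is flat as an A-module. -/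
/-- A Noetherian local ring is **Cohen–Macaulay** if its depth equals its Krull dimension,
i.e. if it admits a regular sequence contained in its maximal ideal whose length equals
its Krull dimension. -/
def IsCohenMacaulayLocal (S : Type*) [CommRing S] [IsLocalRing S] : Prop :=
  ∃ rs : List S, (∀ r ∈ rs, r ∈ IsLocalRing.maximalIdeal S) ∧
    RingTheory.Sequence.IsRegular S rs ∧ (rs.length : WithBot ℕ∞) = ringKrullDim S

/-- `ℤ[Σ⁻¹]`: the localization of `ℤ` at the multiplicative set generated by the primes
in the finite set `Σ`. -/
abbrev ZInv (Sig : Finset ℕ) : Type :=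
  Localization (Submonoid.closure ((Nat.cast : ℕ → ℤ) '' (Sig : Set ℕ)))


open IsLocalRing TensorProduct Pointwise

section FlatTF

variable {A : Type*} [CommRing A] [IsDomain A]

lemma isSMulRegular_of_flat {M : Type*} [AddCommGroup M] [Module A M]
    [Module.Flat A M] {a : A} (ha : a ≠ 0) : IsSMulRegular M a := by
  have h1 : IsSMulRegular A a := fun x y h => by
    exact mul_left_cancel₀ ha (by simpa [smul_eq_mul, mul_comm] using h)
  have h2 : IsSMulRegular (A ⊗[A] M) a := h1.rTensor M
  exact ((TensorProduct.lid A M).isSMulRegular_congr a).mp h2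

lemma flat_of_isSMulRegular {M : Type*} [AddCommGroup M] [Module A M]
    (hprin : ∀ I : Ideal A, Submodule.IsPrincipal I)
    (h : ∀ a : A, a ≠ 0 → IsSMulRegular M a) : Module.Flat A M := by
  rw [Module.Flat.iff_rTensor_injective']
  intro I
  obtain ⟨a, rfl⟩ := (hprin I).principal
  rcases eq_or_ne a 0 with rfl | ha
  · have : (Submodule.span A {(0:A)}) = ⊥ := Submodule.span_zero_singleton A
    haveI : Subsingleton (Submodule.span A {(0:A)}) := by
      rw [this]; infer_instance
    exact Function.injective_of_subsingleton _
  · set I : Ideal A := Submodule.span A {a} with hI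
    have haI : a ∈ I := Submodule.mem_span_singleton_self a
    let f : A →ₗ[A] I := LinearMap.toSpanSingleton A I ⟨a, haI⟩
    have hf : Function.Surjective f := by
      rintro ⟨x, hx⟩
      obtain ⟨c, rfl⟩ := Submodule.mem_span_singleton.mp hx
      exact ⟨c, rfl⟩
    have hcomp : I.subtype ∘ₗ f = LinearMap.toSpanSingleton A A a := by
      ext x; rfl
    have hreg : IsSMulRegular (A ⊗[A] M) a :=
      ((TensorProduct.lid A M).isSMulRegular_congr a).mpr (h a ha)
    have hts : LinearMap.rTensor M (LinearMap.toSpanSingleton A A a)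
        = a • LinearMap.id := by
      apply TensorProduct.ext'
      intro x m
      simp [LinearMap.toSpanSingleton_apply, TensorProduct.smul_tmul',
        smul_smul, mul_comm]
    have h2 : Function.Injective (LinearMap.rTensor M (I.subtype ∘ₗ f)) := by
      rw [hcomp, hts]
      intro u v huv
      exact hreg (by simpa using huv)
    rw [LinearMap.rTensor_comp] at h2
    intro u v huv
    obtain ⟨u', rfl⟩ := LinearMap.rTensor_surjective M (g := f) hf u
    obtain ⟨v', rfl⟩ := LinearMap.rTensor_surjective M (g := f) hf v
    exact congrArg _ (h2 (by simpa using huv))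

end FlatTF

section ZInvFacts

lemma zinv_submonoid_le (Sig : Finset ℕ) (hSig : ∀ p ∈ Sig, p.Prime) :
    Submonoid.closure ((Nat.cast : ℕ → ℤ) '' (Sig : Set ℕ)) ≤ nonZeroDivisors ℤ := by
  rw [Submonoid.closure_le]
  rintro x ⟨p, hp, rfl⟩
  exact mem_nonZeroDivisors_of_ne_zero (by exact_mod_cast (hSig p hp).ne_zero)

lemma zinv_isDomain (Sig : Finset ℕ) (hSig : ∀ p ∈ Sig, p.Prime) :
    IsDomain (ZInv Sig) :=
  IsLocalization.isDomain_localization (zinv_submonoid_le Sig hSig)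

lemma zinv_principal (Sig : Finset ℕ) (I : Ideal (ZInv Sig)) :
    Submodule.IsPrincipal I := by
  have h := IsLocalization.map_comap
    (Submonoid.closure ((Nat.cast : ℕ → ℤ) '' (Sig : Set ℕ))) (ZInv Sig) I
  obtain ⟨n, hn⟩ := (IsPrincipalIdealRing.principal
    (I.comap (algebraMap ℤ (ZInv Sig)))).principal
  refine ⟨⟨algebraMap ℤ (ZInv Sig) n, ?_⟩⟩
  rw [← h, Ideal.under_def, hn]
  show Ideal.map _ (Ideal.span {n}) = Ideal.span _
  rw [Ideal.map_span, Set.image_singleton]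

end ZInvFacts

section MinimalZD

lemma not_mem_minimalPrime_of_isSMulRegular {R : Type*} [CommRing R] {P : Ideal R}
    (hP : P ∈ minimalPrimes R) {r : R} (hr : IsSMulRegular R r) : r ∉ P := by
  intro hrP
  haveI : P.IsPrime := hP.1.1
  have hx : algebraMap R (Localization P.primeCompl) r ∈
      IsLocalRing.maximalIdeal (Localization P.primeCompl) :=
    (IsLocalization.AtPrime.to_map_mem_maximal_iff _ P r).mpr hrP
  obtain ⟨n, hn⟩ :=
    (by haveI : Ring.KrullDimLE 0 (Localization P.primeCompl) := .of_isLocalization _ hP _; exact Ring.KrullDimLE.isNilpotent_iff_mem_maximalIdeal.mpr hx)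
  rw [← map_pow] at hn
  obtain ⟨s, hs⟩ := (IsLocalization.map_eq_zero_iff P.primeCompl _ _).mp hn
  have hs0 : (s : R) = 0 := by
    have := hr.pow n
    refine this ?_
    show r ^ n • (s : R) = r ^ n • (0 : R)
    simp [smul_eq_mul, mul_comm, hs]
  exact s.2 (hs0 ▸ P.zero_mem)

end MinimalZD

section CM

universe u

open RingTheory.Sequence

lemma exists_ltSeries_of_isAssociatedPrime
    {R : Type u} [CommRing R] [IsNoetherianRing R] [IsLocalRing R] :
    ∀ (rs : List R) (M : Type u) [AddCommGroup M] [Module R M] [Module.Finite R M],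
      (∀ r ∈ rs, r ∈ maximalIdeal R) →
      IsWeaklyRegular M rs →
      ∀ P : Ideal R, IsAssociatedPrime P M →
      ∃ l : LTSeries (PrimeSpectrum R), l.length = rs.length ∧ l.head.asIdeal = P := by
  intro rs
  induction rs with
  | nil =>
      intro M _ _ _ _ _ P hP
      exact ⟨RelSeries.singleton _ ⟨P, hP.isPrime⟩, rfl, rfl⟩
  | cons x rest ih =>
      intro M _ _ _ hmem hreg P hP
      rw [isWeaklyRegular_cons_iff] at hreg
      obtain ⟨hx, hrest⟩ := hreg
      obtain ⟨hPprime, y, hy⟩ := isAssociatedPrime_iff.mp hP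
      have hyN : ∀ p ∈ P, p • y = 0 := fun p hp =>
        (Submodule.mem_bot R).mp (Submodule.mem_colon_singleton.mp (hy ▸ hp))
      have hy0 : y ≠ 0 := by
        rintro rfl
        exact hPprime.ne_top (hy.trans
          Submodule.colon_singleton_zero)
      let N : Submodule R M :=
        { carrier := {m | ∀ p ∈ P, p • m = 0}
          add_mem' := fun ha hb p hp => by
            rw [smul_add, ha p hp, hb p hp, add_zero]
          zero_mem' := fun p hp => smul_zero p
          smul_mem' := fun c m hm p hp => by
            rw [smul_comm, hm p hp, smul_zero] }
      have hyN' : y ∈ N := hyN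
      have hNle : ¬ N ≤ x • (⊤ : Submodule R M) := by
        intro hle
        have h1 : N ≤ (maximalIdeal R) • N := by
          intro n hn
          obtain ⟨m, -, rfl⟩ := Set.mem_smul_set.mp (hle hn)
          have hmN : m ∈ N := by
            intro p hp
            apply hx
            show x • (p • m) = x • (0 : M)
            rw [smul_comm, hn p hp, smul_zero]
          exact Submodule.smul_mem_smul (hmem x (List.mem_cons_self)) hmN
        have hbot : N = ⊥ :=
          Submodule.eq_bot_of_le_smul_of_le_jacobson_bot (maximalIdeal R) N
            (IsNoetherian.noetherian N) h1
            (IsLocalRing.jacobson_eq_maximalIdeal ⊥ bot_ne_top).ge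
        exact hy0 (by simpa [hbot] using hyN')
      obtain ⟨n, hnN, hnx⟩ := SetLike.not_le_iff_exists.mp hNle
      have hn0 : (Submodule.Quotient.mk n : QuotSMulTop x M) ≠ 0 := by
        simpa [Submodule.Quotient.mk_eq_zero] using hnx
      obtain ⟨P', hP', hle'⟩ :=
        exists_le_isAssociatedPrime_of_isNoetherianRing R
          (Submodule.Quotient.mk n : QuotSMulTop x M) hn0
      have hPP' : P ≤ P' := by
        intro p hp
        apply hle'
        rw [Submodule.mem_colon_singleton, Submodule.mem_bot, ← Submodule.Quotient.mk_smul,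
          hnN p hp, Submodule.Quotient.mk_zero]
      have hxP' : x ∈ P' := by
        apply hle'
        rw [Submodule.mem_colon_singleton, Submodule.mem_bot, ← Submodule.Quotient.mk_smul,
          Submodule.Quotient.mk_eq_zero]
        exact Submodule.smul_mem_pointwise_smul n x ⊤ trivial
      have hxP : x ∉ P := by
        intro hxp
        exact hy0 (hx (by
          show x • y = x • (0 : M)
          rw [hyN x hxp, smul_zero]))
      obtain ⟨l, hlen, hhead⟩ := ih (QuotSMulTop x M)
        (fun r hr => hmem r (List.mem_cons_of_mem _ hr)) hrest P' hP'
      have hlt : (⟨P, hPprime⟩ : PrimeSpectrum R) < l.head := by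
        have : P < P' := lt_of_le_of_ne hPP' (fun hEq => hxP (hEq ▸ hxP'))
        show (⟨P, hPprime⟩ : PrimeSpectrum R).asIdeal < l.head.asIdeal
        rw [hhead]; exact this
      exact ⟨l.cons ⟨P, hPprime⟩ hlt, by simp [hlen], by simp⟩

lemma mem_minimalPrimes_of_isAssociatedPrime
    {R : Type u} [CommRing R] [IsNoetherianRing R] [IsLocalRing R]
    (hCM : IsCohenMacaulayLocal R) {P : Ideal R}
    (hP : IsAssociatedPrime P R) : P ∈ minimalPrimes R := by
  obtain ⟨rs, hmem, hreg, hdim⟩ := hCM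
  obtain ⟨l, hlen, hhead⟩ :=
    exists_ltSeries_of_isAssociatedPrime rs R hmem hreg.toIsWeaklyRegular P hP
  rw [minimalPrimes_eq_minimals]
  refine ⟨hP.isPrime, fun {Q} hQ hQP => ?_⟩
  by_contra hPQ
  have hlt : (⟨Q, hQ⟩ : PrimeSpectrum R) < l.head := by
    show (⟨Q, hQ⟩ : PrimeSpectrum R).asIdeal < l.head.asIdeal
    rw [hhead]
    exact lt_of_le_of_ne hQP (fun h => hPQ (h ▸ le_refl _))
  have hle := Order.LTSeries.length_le_krullDim (l.cons ⟨Q, hQ⟩ hlt)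
  have hlen' : (l.cons ⟨Q, hQ⟩ hlt).length = rs.length + 1 := by simp [hlen]
  rw [hlen'] at hle
  have hdim' : ringKrullDim R = Order.krullDim (PrimeSpectrum R) := rfl
  rw [← hdim', ← hdim] at hle
  have hcon : rs.length + 1 ≤ rs.length := by exact_mod_cast hle
  omega

end CM


/-- Let `Σ` be a finite set of primes, `A = ℤ[Σ⁻¹]`, and let `R` be a Noetherian local
`A`-algebra that is Cohen–Macaulay.  Then `R` is flat over `A` if and only if `R/P` is
flat over `A` for every minimal prime `P` of `R`. -/
theorem flat_iff_quotient_minimalPrimes_flat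
    (Sig : Finset ℕ) (hSig : ∀ p ∈ Sig, p.Prime)
    (R : Type*) [CommRing R] [IsNoetherianRing R] [IsLocalRing R]
    [Algebra (ZInv Sig) R]
    (hCM : IsCohenMacaulayLocal R) :
    Module.Flat (ZInv Sig) R ↔
      ∀ P ∈ minimalPrimes R, Module.Flat (ZInv Sig) (R ⧸ P) := by
  haveI : IsDomain (ZInv Sig) := zinv_isDomain Sig hSig
  constructor
  · intro hflat P hP
    haveI : P.IsPrime := hP.1.1
    apply flat_of_isSMulRegular (zinv_principal Sig)
    intro a ha
    haveI := hflat
    have hreg : IsSMulRegular R (algebraMap (ZInv Sig) R a) := by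
      rw [isSMulRegular_algebraMap_iff]
      exact isSMulRegular_of_flat ha
    have hnot : algebraMap (ZInv Sig) R a ∉ P :=
      not_mem_minimalPrime_of_isSMulRegular hP hreg
    rw [← isSMulRegular_algebraMap_iff (A := R ⧸ P)]
    have h0 : algebraMap (ZInv Sig) (R ⧸ P) a ≠ 0 := by
      rw [IsScalarTower.algebraMap_apply (ZInv Sig) R (R ⧸ P),
        Ideal.Quotient.algebraMap_eq, Ne, Ideal.Quotient.eq_zero_iff_mem]
      exact hnot
    intro u v huv
    exact mul_left_cancel₀ h0 (by simpa only [smul_eq_mul] using huv)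
  · intro hquot
    apply flat_of_isSMulRegular (zinv_principal Sig)
    intro a ha
    rw [← isSMulRegular_algebraMap_iff (A := R)]
    set r := algebraMap (ZInv Sig) R a with hr
    have hrmin : ∀ P ∈ minimalPrimes R, r ∉ P := by
      intro P hP hrP
      haveI : P.IsPrime := hP.1.1
      haveI := hquot P hP
      have hregQ : IsSMulRegular (R ⧸ P) a := isSMulRegular_of_flat ha
      have h0 : algebraMap (ZInv Sig) (R ⧸ P) a = 0 := by
        rw [IsScalarTower.algebraMap_apply (ZInv Sig) R (R ⧸ P),
          Ideal.Quotient.algebraMap_eq, Ideal.Quotient.eq_zero_iff_mem]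
        exact hrP
      have hone : a • (1 : R ⧸ P) = 0 := by
        have h11 : (1 : R ⧸ P) = Submodule.Quotient.mk (1 : R) := rfl
        rw [h11, ← Submodule.Quotient.mk_smul, Algebra.smul_def, mul_one,
          Submodule.Quotient.mk_eq_zero]
        exact hrP
      have h1 : (1 : R ⧸ P) = 0 := hregQ (by
        show a • (1 : R ⧸ P) = a • (0 : R ⧸ P)
        rw [hone, smul_zero])
      exact one_ne_zero h1
    rw [isSMulRegular_iff_right_eq_zero_of_smul]
    intro x hx
    by_contra hx0
    have hzd : r ∈ ⋃ p ∈ associatedPrimes R R, (p : Set R) := by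
      rw [biUnion_associatedPrimes_eq_zero_divisors]
      exact ⟨x, hx0, hx⟩
    obtain ⟨p, hp, hrp⟩ := Set.mem_iUnion₂.mp hzd
    exact hrmin p (mem_minimalPrimes_of_isAssociatedPrime hCM hp) hrp
end

section
/- Let L♯ be a self-dual quadratic lattice over ℤ, and let N ⊆ L♯ be a ℤ-submodule that is a direct summand of L♯ as a ℤ-module and such that the restriction of the quadratic form to N ⊗ ℚ is nondegenerate. Then the finite abelian group N∨/N can be generated by rank_ℤ(L♯) − rank_ℤ(N) elements. -/
open scoped TensorProduct

/-- A `ℤ`-valued quadratic form on a finite free `ℤ`-module is self-dual if its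
associated bilinear form `[x,y] = Q(x+y) - Q(x) - Q(y)` induces an isomorphism
`L ≅ Hom_ℤ(L, ℤ)`. -/
def IsSelfDualLattice {L : Type*} [AddCommGroup L] [Module ℤ L]
    (Q : QuadraticForm ℤ L) : Prop :=
  Function.Bijective fun x : L => (QuadraticMap.polarBilin Q x : L →ₗ[ℤ] ℤ)

/-- The dual lattice `N∨` of `N`, regarded as the subset of `ℚ ⊗ N` consisting of those
`x` pairing integrally (under the bilinear form of `Qℚ`) with every element of `N`. -/
def dualLatticeSet {N : Type*} [AddCommGroup N] [Module ℤ N]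
    (Qℚ : QuadraticForm ℚ (ℚ ⊗[ℤ] N)) : Set (ℚ ⊗[ℤ] N) :=
  {x | ∀ y : N, ∃ k : ℤ,
    Qℚ (x + (1 : ℚ) ⊗ₜ[ℤ] y) - Qℚ x - Qℚ ((1 : ℚ) ⊗ₜ[ℤ] y) = (k : ℚ)}

/-- all `ℤ`-module structures on an `AddCommGroup` agree -/
private lemma intModule_eq {M : Type*} [AddCommGroup M] (i1 i2 : Module ℤ M) : i1 = i2 :=
  @Subsingleton.elim _ (@Unique.instSubsingleton _ AddCommGroup.uniqueIntModule) i1 i2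

private lemma finrankInt_congr {M : Type*} [AddCommGroup M] (i1 i2 : Module ℤ M) :
    @Module.finrank ℤ M _ _ i1 = @Module.finrank ℤ M _ _ i2 := by
  rw [intModule_eq i1 i2]

private lemma finrankInt_eq_of_addEquiv' {M M₂ : Type*} [AddCommGroup M] [AddCommGroup M₂]
    (f : M ≃+ M₂) :
    Module.finrank ℤ M = Module.finrank ℤ M₂ :=
  f.toIntLinearEquiv.finrank_eq

private lemma finrankInt_eq_of_addEquiv {M M₂ : Type*} [AddCommGroup M] [AddCommGroup M₂]
    (i1 : Module ℤ M) (i2 : Module ℤ M₂) (f : M ≃+ M₂) :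
    @Module.finrank ℤ M _ _ i1 = @Module.finrank ℤ M₂ _ _ i2 := by
  rw [intModule_eq i1 (AddCommGroup.toIntModule M), intModule_eq i2 (AddCommGroup.toIntModule M₂)]
  exact finrankInt_eq_of_addEquiv' f

private lemma finrankInt_prod' {M M₂ : Type*} [AddCommGroup M] [AddCommGroup M₂]
    (i1 : Module ℤ M) (i2 : Module ℤ M₂)
    (h1 : @Module.Finite ℤ M _ _ i1) (h2 : @Module.Finite ℤ M₂ _ _ i2)
    (f1 : @Module.Free ℤ M _ _ i1) (f2 : @Module.Free ℤ M₂ _ _ i2) :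
    @Module.finrank ℤ (M × M₂) _ _ (@Prod.instModule ℤ M M₂ _ _ _ i1 i2)
      = @Module.finrank ℤ M _ _ i1 + @Module.finrank ℤ M₂ _ _ i2 := by
  letI := i1; letI := i2
  exact Module.finrank_prod

private lemma finrankInt_prod {M M₂ : Type*} [AddCommGroup M] [AddCommGroup M₂]
    (iP : Module ℤ (M × M₂)) (i1 : Module ℤ M) (i2 : Module ℤ M₂)
    (h1 : @Module.Finite ℤ M _ _ i1) (h2 : @Module.Finite ℤ M₂ _ _ i2)
    (f1 : @Module.Free ℤ M _ _ i1) (f2 : @Module.Free ℤ M₂ _ _ i2) :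
    @Module.finrank ℤ (M × M₂) _ _ iP
      = @Module.finrank ℤ M _ _ i1 + @Module.finrank ℤ M₂ _ _ i2 := by
  rw [intModule_eq iP (@Prod.instModule ℤ M M₂ _ _ _ i1 i2)]
  exact finrankInt_prod' i1 i2 h1 h2 f1 f2

private lemma moduleFiniteInt_congr {M : Type*} [AddCommGroup M] (i1 i2 : Module ℤ M)
    (h : @Module.Finite ℤ M _ _ i1) : @Module.Finite ℤ M _ _ i2 := by
  rwa [intModule_eq i1 i2] at h

/-- Let `L♯` be a self-dual quadratic lattice over `ℤ` and let `N ⊆ L♯` be a `ℤ`-module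
direct summand on which the restricted quadratic form is nondegenerate over `ℚ`.  Then
the finite abelian group `N∨/N` can be generated by `rank L♯ - rank N` elements:
there exist `rank L♯ - rank N` elements of `N∨` such that every element of `N∨` is an
integral combination of them plus an element of `N`. -/
theorem dual_quotient_generated_of_direct_summand
    (L : Type*) [AddCommGroup L] [Module ℤ L] [Module.Free ℤ L] [Module.Finite ℤ L]
    (Q : QuadraticForm ℤ L) (hsd : IsSelfDualLattice Q)
    (N : Submodule ℤ L) (hsummand : ∃ C : Submodule ℤ L, IsCompl N C)
    (QNℚ : QuadraticForm ℚ (ℚ ⊗[ℤ] N))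
    (hQNℚ : ∀ x : N, QNℚ ((1 : ℚ) ⊗ₜ[ℤ] x) = (Q (x : L) : ℚ))
    (hnd : QFNondegenerate QNℚ) :
    ∃ g : Fin (Module.finrank ℤ L - Module.finrank ℤ N) → ℚ ⊗[ℤ] N,
      (∀ i, g i ∈ dualLatticeSet QNℚ) ∧
      ∀ x ∈ dualLatticeSet QNℚ,
        ∃ (c : Fin (Module.finrank ℤ L - Module.finrank ℤ N) → ℤ) (y : N),
          x = (∑ i, c i • g i) + (1 : ℚ) ⊗ₜ[ℤ] y := by
  classical
  obtain ⟨C, hc⟩ := hsummand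
  haveI : IsNoetherian ℤ L := isNoetherian_of_isNoetherianRing_of_finite ℤ L
  haveI : Module.Finite ℤ N :=
    moduleFiniteInt_congr N.module _ (Module.Finite.iff_fg.mpr (IsNoetherian.noetherian N))
  haveI : Module.Finite ℤ C :=
    moduleFiniteInt_congr C.module _ (Module.Finite.iff_fg.mpr (IsNoetherian.noetherian C))
  have torsionfree : ∀ (m : ℤ) (z : L), m • z = 0 → m = 0 ∨ z = 0 := by
    intro m z h
    by_cases hm : m = 0
    · exact Or.inl hm
    refine Or.inr ?_
    let bb := Module.Free.chooseBasis ℤ L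
    let E := bb.repr.toLinearMap.toAddMonoidHom
    have h5 : m • (bb.repr z) = 0 := by
      have h6 : E (m • z) = m • E z := map_zsmul E m z
      have h7 : E (m • z) = 0 := by rw [h]; exact map_zero E
      rw [h6] at h7
      exact h7
    have h8 : bb.repr z = 0 := by
      ext a
      have h9 : (Finsupp.applyAddHom a) (m • bb.repr z) = 0 := by
        rw [h5]; exact map_zero _
      rw [map_zsmul] at h9
      have h10 : m * (bb.repr z a) = 0 := by rwa [zsmul_eq_mul] at h9
      simpa using (mul_eq_zero.mp h10).resolve_left hm
    have h11 : z = bb.repr.symm 0 := by rw [← h8]; simp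
    simpa using h11
  haveI : NoZeroSMulDivisors ℤ ↥N := by
    refine ⟨fun {m y} hmy => ?_⟩
    have h1 : m • (y : L) = 0 := by
      have h0 := congrArg (Subtype.val) hmy
      rw [show ((m • y : ↥N) : L) = m • (y : L) from rfl] at h0
      simpa using h0
    by_cases hm : m = 0
    · exact Or.inl hm
    · exact Or.inr (Subtype.ext (by simpa using torsionfree m _ h1 |>.resolve_left hm))
  haveI : NoZeroSMulDivisors ℤ ↥C := by
    refine ⟨fun {m y} hmy => ?_⟩
    have h1 : m • (y : L) = 0 := by
      have h0 := congrArg (Subtype.val) hmy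
      rw [show ((m • y : ↥C) : L) = m • (y : L) from rfl] at h0
      simpa using h0
    by_cases hm : m = 0
    · exact Or.inl hm
    · exact Or.inr (Subtype.ext (by simpa using torsionfree m _ h1 |>.resolve_left hm))
  haveI : Module.Free ℤ N := inferInstance
  haveI : Module.Free ℤ C := inferInstance
  haveI : Module.Finite ℚ (ℚ ⊗[ℤ] ↥N) := Module.Finite.base_change ℤ ℚ ↥N
  -- the rank of the complement
  have h2 : Module.finrank ℤ (↥N × ↥C) = Module.finrank ℤ ↥N + Module.finrank ℤ ↥C :=
    finrankInt_prod _ _ _ inferInstance inferInstance inferInstance inferInstance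
  let gEquiv : (↥N × ↥C) ≃+ L :=
    { toFun := fun p => (p.1 : L) + (p.2 : L)
      invFun := fun z => (N.projectionOnto C hc z, C.projectionOnto N hc.symm z)
      left_inv := fun p => by
        have e1 : N.projectionOnto C hc ((p.1 : L) + (p.2 : L)) = p.1 := by
          rw [map_add, Submodule.projectionOnto_apply_left hc p.1,
            Submodule.projectionOnto_apply_right hc p.2, add_zero]
        have e2 : C.projectionOnto N hc.symm ((p.1 : L) + (p.2 : L)) = p.2 := by
          rw [map_add, Submodule.projectionOnto_apply_left hc.symm p.2,
            Submodule.projectionOnto_apply_right hc.symm p.1, zero_add]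
        exact Prod.ext e1 e2
      right_inv := fun z => Submodule.projection_add_projection_eq_self hc z
      map_add' := fun p q => by
        simp only [Prod.fst_add, Prod.snd_add, Submodule.coe_add]
        exact add_add_add_comm _ _ _ _ }
  have h1 : Module.finrank ℤ (↥N × ↥C) = Module.finrank ℤ L :=
    finrankInt_eq_of_addEquiv _ _ gEquiv
  have hrankC : Module.finrank ℤ C = Module.finrank ℤ L - Module.finrank ℤ N := by omega
  let b : Module.Basis (Fin (Module.finrank ℤ L - Module.finrank ℤ N)) ℤ C :=
    (Module.finBasis ℤ C).reindex (finCongr hrankC)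
  -- the polar bilinear form over ℚ
  set B : (ℚ ⊗[ℤ] ↥N) →ₗ[ℚ] Module.Dual ℚ (ℚ ⊗[ℤ] ↥N) := QNℚ.polarBilin with hB
  have hBapp : ∀ (x y : ℚ ⊗[ℤ] ↥N), B x y = QNℚ (x + y) - QNℚ x - QNℚ y := fun x y => rfl
  have hBinj : Function.Injective B := by
    intro x y hxy
    have h0 : B (x - y) = 0 := by rw [map_sub, hxy, sub_self]
    have := hnd (x - y) (fun z => by
      have h1 := LinearMap.congr_fun h0 z
      rwa [hBapp] at h1)
    exact sub_eq_zero.mp this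
  have hBsurj : Function.Surjective B :=
    (LinearMap.injective_iff_surjective_of_finrank_eq_finrank
      (Subspace.dual_finrank_eq).symm).mp hBinj
  -- extension of integral functionals to ℚ-functionals
  let e : (ℚ ⊗[ℤ] ℤ) →ₗ[ℚ] ℚ := (Algebra.TensorProduct.rid ℤ ℚ ℚ).toLinearMap
  let ext : (↥N →ₗ[ℤ] ℤ) → ((ℚ ⊗[ℤ] ↥N) →ₗ[ℚ] ℚ) := fun f => e ∘ₗ f.baseChange ℚ
  have hext : ∀ (f : ↥N →ₗ[ℤ] ℤ) (y : N), ext f ((1 : ℚ) ⊗ₜ[ℤ] y) = (f y : ℚ) := by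
    intro f y
    simp [ext, e, LinearMap.baseChange_tmul, Algebra.TensorProduct.rid_tmul, zsmul_eq_mul]
  -- two ℚ-functionals agreeing on `1 ⊗ y` agree
  have hspan : ∀ (F G : (ℚ ⊗[ℤ] ↥N) →ₗ[ℚ] ℚ),
      (∀ y : N, F ((1 : ℚ) ⊗ₜ[ℤ] y) = G ((1 : ℚ) ⊗ₜ[ℤ] y)) → F = G := by
    intro F G h
    apply LinearMap.ext
    intro x
    induction x using TensorProduct.induction_on with
    | zero => simp
    | tmul a y =>
        have ha : (a ⊗ₜ[ℤ] y : ℚ ⊗[ℤ] ↥N) = a • ((1 : ℚ) ⊗ₜ[ℤ] y) := by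
          rw [TensorProduct.smul_tmul', smul_eq_mul, mul_one]
        rw [ha, map_smul, map_smul, h]
    | add u v hu hv => rw [map_add, map_add, hu, hv]
  have huniq : ∀ x x' : ℚ ⊗[ℤ] ↥N,
      (∀ y : N, B x ((1 : ℚ) ⊗ₜ[ℤ] y) = B x' ((1 : ℚ) ⊗ₜ[ℤ] y)) → x = x' := by
    intro x x' h
    exact hBinj (hspan (B x) (B x') h)
  -- the "projection" from L to N∨
  have hex : ∀ l : L, ∃ x : ℚ ⊗[ℤ] ↥N,
      ∀ y : N, B x ((1 : ℚ) ⊗ₜ[ℤ] y) = ((Q.polarBilin l) (y : L) : ℚ) := by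
    intro l
    obtain ⟨x, hx⟩ := hBsurj
      (ext ((Q.polarBilin l).toAddMonoidHom.comp (AddSubgroupClass.subtype N)).toIntLinearMap)
    refine ⟨x, fun y => ?_⟩
    have h2 := LinearMap.congr_fun hx ((1 : ℚ) ⊗ₜ[ℤ] y)
    rw [h2, hext]
    rfl
  choose π hπ using hex
  -- π is additive
  have hπadd : ∀ l l' : L, π (l + l') = π l + π l' := by
    intro l l'
    apply huniq
    intro y
    simp only [map_add, LinearMap.add_apply, hπ]
    push_cast
    ring
  let piH : L →+ (ℚ ⊗[ℤ] ↥N) := AddMonoidHom.mk' π hπadd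
  -- π restricted to N is `1 ⊗ ·`
  have hπN : ∀ n : N, π (n : L) = (1 : ℚ) ⊗ₜ[ℤ] n := by
    intro n
    apply huniq
    intro y
    rw [hπ, hBapp, ← TensorProduct.tmul_add, hQNℚ, hQNℚ, hQNℚ]
    simp only [QuadraticMap.polarBilin_apply_apply, QuadraticMap.polar, Submodule.coe_add]
    push_cast
    ring
  -- all values of π lie in the dual lattice
  have hmem : ∀ l : L, π l ∈ dualLatticeSet QNℚ := fun l y =>
    ⟨(Q.polarBilin l) (y : L), (hBapp _ _).symm.trans (hπ l y)⟩
  refine ⟨fun i => π (b i : L), fun i => hmem _, ?_⟩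
  -- surjectivity
  intro x hx
  choose k hk using hx
  have hk' : ∀ y : N, B x ((1 : ℚ) ⊗ₜ[ℤ] y) = (k y : ℚ) := fun y => (hBapp _ _).trans (hk y)
  have hkadd : ∀ y z : N, k (y + z) = k y + k z := by
    intro y z
    have h2 : ((k (y + z) : ℤ) : ℚ) = ((k y + k z : ℤ) : ℚ) := by
      rw [← hk', TensorProduct.tmul_add, map_add]
      push_cast
      rw [hk', hk']
    exact_mod_cast h2
  let ι : ↥N →+ (ℚ ⊗[ℤ] ↥N) := ((TensorProduct.mk ℤ ℚ ↥N) 1).toAddMonoidHom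
  have hksmul : ∀ (m : ℤ) (y : N), k (m • y) = m * k y := by
    intro m y
    have h1 : ((1 : ℚ) ⊗ₜ[ℤ] (m • y) : ℚ ⊗[ℤ] ↥N) = m • ((1 : ℚ) ⊗ₜ[ℤ] y) :=
      map_zsmul ι m y
    have h2 : ((k (m • y) : ℤ) : ℚ) = ((m * k y : ℤ) : ℚ) := by
      rw [← hk', h1, map_zsmul (B x) m ((1 : ℚ) ⊗ₜ[ℤ] y), hk', zsmul_eq_mul]
      push_cast
      ring
    exact_mod_cast h2
  let proj : @LinearMap ℤ ℤ _ _ (RingHom.id ℤ) L ↥N _ _ _ N.module := N.projectionOnto C hc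
  let F : L →ₗ[ℤ] ℤ :=
    { toFun := fun z => k (proj z)
      map_add' := fun z z' => by
        rw [map_add]; exact hkadd _ _
      map_smul' := fun m z =>
        (congrArg (fun w => k (proj w)) (int_smul_eq_zsmul inferInstance m z)).trans
          ((congrArg k (map_zsmul proj.toAddMonoidHom m z)).trans
            (hksmul m (proj z))) }
  obtain ⟨l, hl⟩ := hsd.2 F
  have hl' : ∀ z : L, (Q.polarBilin l) z = k (proj z) := fun z => LinearMap.congr_fun hl z
  have hxπ : x = π l := by
    apply huniq
    intro y
    rw [hk', hπ, hl']
    rw [show proj (y : L) = y from Submodule.projectionOnto_apply_left hc y]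
  set nn : N := proj l with hnn
  set cC : C := C.projectionOnto N hc.symm l with hcC
  have hdecomp : (nn : L) + (cC : L) = l :=
    Submodule.projection_add_projection_eq_self hc l
  let piC : ↥C →+ (ℚ ⊗[ℤ] ↥N) := piH.comp (AddSubgroupClass.subtype C)
  have key : π (cC : L) = ∑ i, b.repr cC i • π (b i : L) := by
    show piC cC = ∑ i, b.repr cC i • piC (b i)
    conv_lhs => rw [← b.sum_repr cC]
    rw [map_sum]
    exact Finset.sum_congr rfl fun i _ => map_zsmul piC _ _
  refine ⟨fun i => b.repr cC i, nn, ?_⟩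
  rw [hxπ, ← hdecomp, hπadd, hπN, key, add_comm]
end
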